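/- In the edge-rooted binary tree T_n of depth n with edge resistances r_e = 2^{d(e)-1} X_e where X_e ∈ [a,b] (0 < a < b), the optimal unit flow Θ* from root to leaves satisfies, for every edge e at depth d(e), Θ*(e) ≤ bn/(a(n - d(e) + 1)2^{d(e)-1}). -/

import Mathlib

/-!
Ohm's law along the path to an edge `e`: at each branching node the current splits in inverse
proportion to the two subtree resistances, so the current through `e` times the (rescaled)
resistance `R_{n,e}` of the subtree below `e` is the potential at the top of `e`, which is at
most the potential `R_n` at the root. Rayleigh monotonicity for the series-parallel recursion
gives `a (m + 1) ≤ R ≤ b (m + 1)` for a tree of depth `m` with weights in `[a, b]`; combining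
`R_n ≤ bn` with `R_{n,e} ≥ a (n - d(e) + 1) 2^(d(e)-1)` gives the bound.
-/

/-- Effective resistance of the edge-rooted binary tree `T_n` (`treeRes (n-1)`
corresponds to `T_n`), via the series-parallel recursion. -/
noncomputable def treeRes : ℕ → (List Bool → ℝ) → ℝ
  | 0, w => w []
  | n + 1, w =>
      w [] +
        (2 * treeRes n (fun l => w (true :: l))) * (2 * treeRes n (fun l => w (false :: l))) /
          (2 * treeRes n (fun l => w (true :: l)) + 2 * treeRes n (fun l => w (false :: l)))

/-- The optimal (current) unit flow of the tree: the root edge carries unit flow, and at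
each node the flow splits between the two subtrees proportionally to their conductances. -/
noncomputable def treeFlow : ℕ → (List Bool → ℝ) → List Bool → ℝ
  | _, _, [] => 1
  | 0, _, _ :: _ => 0
  | n + 1, w, x :: l =>
      (treeRes n (fun m => w ((!x) :: m)) /
          (treeRes n (fun m => w (true :: m)) + treeRes n (fun m => w (false :: m)))) *
        treeFlow n (fun m => w (x :: m)) l

lemma le_two_mul_mul_div_add {c x y : ℝ} (hc : 0 < c) (hx : c ≤ x) (hy : c ≤ y) :
    c ≤ 2 * (x * y) / (x + y) := by
  rw [le_div_iff₀ (by linarith)]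
  nlinarith

lemma two_mul_mul_div_add_le {C x y : ℝ} (hx : 0 < x) (hy : 0 < y) (hxC : x ≤ C)
    (hyC : y ≤ C) : 2 * (x * y) / (x + y) ≤ C := by
  rw [div_le_iff₀ (by linarith)]
  nlinarith

lemma treeRes_succ (n : ℕ) (w : List Bool → ℝ) :
    treeRes (n + 1) w = w [] +
      2 * (treeRes n (fun l => w (true :: l)) * treeRes n (fun l => w (false :: l))) /
        (treeRes n (fun l => w (true :: l)) + treeRes n (fun l => w (false :: l))) := by
  rw [treeRes, mul_mul_mul_comm, ← mul_add, mul_assoc, mul_div_mul_left _ _ two_ne_zero]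

lemma treeRes_pos {w : List Bool → ℝ} (hw : ∀ l, 0 < w l) (n : ℕ) : 0 < treeRes n w := by
  induction n generalizing w with
  | zero => exact hw []
  | succ k ih =>
    have := ih fun l => hw (true :: l)
    have := ih fun l => hw (false :: l)
    rw [treeRes_succ]
    have := hw []
    positivity

lemma le_treeRes {a : ℝ} {w : List Bool → ℝ} (ha : 0 < a) (hw : ∀ l, a ≤ w l) (n : ℕ) :
    a * (n + 1) ≤ treeRes n w := by
  induction n generalizing w with
  | zero => simpa [treeRes] using hw []
  | succ k ih =>
    rw [treeRes_succ]
    have := le_two_mul_mul_div_add (by positivity)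
      (ih fun l => hw (true :: l)) (ih fun l => hw (false :: l))
    have := hw []
    push_cast
    linarith

lemma treeRes_le {b : ℝ} {w : List Bool → ℝ} (hw : ∀ l, 0 < w l) (hwb : ∀ l, w l ≤ b)
    (n : ℕ) : treeRes n w ≤ b * (n + 1) := by
  induction n generalizing w with
  | zero => simpa [treeRes] using hwb []
  | succ k ih =>
    rw [treeRes_succ]
    have := two_mul_mul_div_add_le (treeRes_pos (fun l => hw (true :: l)) k)
      (treeRes_pos (fun l => hw (false :: l)) k)
      (ih (fun l => hw (true :: l)) fun l => hwb (true :: l))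
      (ih (fun l => hw (false :: l)) fun l => hwb (false :: l))
    have := hwb []
    push_cast
    linarith

lemma treeRes_not_mul_treeRes (n : ℕ) (w : List Bool → ℝ) (x : Bool) :
    treeRes n (fun l => w ((!x) :: l)) * treeRes n (fun l => w (x :: l)) =
      treeRes n (fun l => w (true :: l)) * treeRes n (fun l => w (false :: l)) := by
  cases x
  · rw [Bool.not_false]
  · rw [Bool.not_true, mul_comm]

lemma treeFlow_nonneg {w : List Bool → ℝ} (hw : ∀ l, 0 < w l) (n : ℕ) (e : List Bool) :
    0 ≤ treeFlow n w e := by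
  induction e generalizing n w with
  | nil => simp [treeFlow]
  | cons x l ih =>
    cases n with
    | zero => simp [treeFlow]
    | succ k =>
      have := treeRes_pos (fun m => hw ((!x) :: m)) k
      have := treeRes_pos (fun m => hw (true :: m)) k
      have := treeRes_pos (fun m => hw (false :: m)) k
      have := ih (fun m => hw (x :: m)) k
      rw [treeFlow]
      positivity

/-- `2 ^ e.length * treeRes (n - e.length) (fun m => w (e ++ m))` is the resistance `R_{n,e}` of
the subtree hanging below `e`, rescaled to the depth of `e`; the product with the flow is the
potential at the top of `e`. -/
lemma treeFlow_mul_le_treeRes {w : List Bool → ℝ} (hw : ∀ l, 0 < w l) {n : ℕ}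
    {e : List Bool} (he : e.length ≤ n) :
    treeFlow n w e * (2 ^ e.length * treeRes (n - e.length) (fun m => w (e ++ m))) ≤
      treeRes n w := by
  induction e generalizing n w with
  | nil => simp [treeFlow]
  | cons x l ih =>
    obtain ⟨k, rfl⟩ : ∃ k, n = k + 1 := ⟨n - 1, by simp at he; omega⟩
    set Rt := treeRes k (fun m => w (true :: m))
    set Rf := treeRes k (fun m => w (false :: m))
    set split := treeRes k (fun m => w ((!x) :: m)) / (Rt + Rf)
    have hRt : 0 < Rt := treeRes_pos (fun m => hw _) k
    have hRf : 0 < Rf := treeRes_pos (fun m => hw _) k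
    have hsplit : 0 ≤ split := div_nonneg (treeRes_pos (fun m => hw _) k).le (by positivity)
    have potential := ih (fun m => hw (x :: m)) (Nat.le_of_succ_le_succ he)
    calc treeFlow (k + 1) w (x :: l) *
          (2 ^ (x :: l).length * treeRes (k + 1 - (x :: l).length) (fun m => w (x :: l ++ m)))
        = 2 * split * (treeFlow k (fun m => w (x :: m)) l *
            (2 ^ l.length * treeRes (k - l.length) (fun m => w (x :: (l ++ m))))) := by
          simp only [treeFlow, List.length_cons, Nat.add_sub_add_right, List.cons_append]
          ring
      _ ≤ 2 * split * treeRes k (fun m => w (x :: m)) := by gcongr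
      _ = 2 * (Rt * Rf) / (Rt + Rf) := by
          rw [← treeRes_not_mul_treeRes k w x]
          ring
      _ ≤ treeRes (k + 1) w := by
          rw [treeRes_succ]
          linarith [hw []]

/-- The edge indexed by the path `e` has depth `d(e) = e.length + 1`, and `treeFlow (n - 1)` is
the flow of `T_n`. -/
theorem stmt_14_general (a b : ℝ) (ha : 0 < a) (n : ℕ) (hn : 1 ≤ n)
    (w : List Bool → ℝ) (hw : ∀ l, a ≤ w l ∧ w l ≤ b)
    (e : List Bool) (he : e.length ≤ n - 1) :
    treeFlow (n - 1) w e ≤ b * n / (a * ((n : ℝ) - e.length) * 2 ^ e.length) := by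
  obtain ⟨k, rfl⟩ : ∃ k, n = k + 1 := ⟨n - 1, by omega⟩
  rw [Nat.add_sub_cancel] at he ⊢
  have hw_pos l : 0 < w l := ha.trans_le (hw l).1
  have hsub :
      a * ((k + 1 : ℕ) - e.length : ℝ) ≤ treeRes (k - e.length) (fun m => w (e ++ m)) := by
    have := le_treeRes ha (fun m => (hw (e ++ m)).1) (k - e.length)
    rw [Nat.cast_sub he] at this
    push_cast
    linarith
  have hdepth : (0 : ℝ) < (k + 1 : ℕ) - e.length := by
    rw [sub_pos, Nat.cast_lt]
    omega
  rw [le_div_iff₀ (by positivity)]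
  calc treeFlow k w e * (a * ((k + 1 : ℕ) - e.length : ℝ) * 2 ^ e.length)
      ≤ treeFlow k w e * (2 ^ e.length * treeRes (k - e.length) (fun m => w (e ++ m))) := by
        have := treeFlow_nonneg hw_pos k e
        rw [mul_comm _ (2 ^ e.length)]
        gcongr
    _ ≤ treeRes k w := treeFlow_mul_le_treeRes hw_pos he
    _ ≤ b * (k + 1 : ℕ) := by
        rw [Nat.cast_succ]
        exact treeRes_le hw_pos (fun l => (hw l).2) k

/-- In `T_n`, the edge indexed by the path `e` has depth `d(e) = e.length + 1`, and the
optimal unit flow satisfies `Θ*(e) ≤ bn / (a (n - d(e) + 1) 2^(d(e)-1))`. -/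
theorem stmt_14 (a b : ℝ) (ha : 0 < a) (hab : a < b) (n : ℕ) (hn : 1 ≤ n)
    (w : List Bool → ℝ) (hw : ∀ l, a ≤ w l ∧ w l ≤ b)
    (e : List Bool) (he : e.length ≤ n - 1) :
    treeFlow (n - 1) w e ≤ b * n / (a * ((n : ℝ) - e.length) * 2 ^ e.length) :=
  stmt_14_general a b ha n hn w hw e he
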